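/- Let X and Y be pre-ordered Banach spaces with closed cones, and α > 0. If X₊ is generating in X and Y is α-normal, then there exists γ > 0 such that B(X,Y) is γ-normal: for all bounded linear operators T, S : X → Y, if 0 ≤ T ≤ S in the operator order then ‖T‖ ≤ γ‖S‖. -/

import Mathlib

/-!
By the Klee–Andô theorem a closed generating cone `C` in a Banach space admits bounded
decompositions: every `x` is `a - b` with `a, b ∈ C` and `‖a‖, ‖b‖ ≤ M ‖x‖`. Baire's theorem
gives this up to closure on a ball, and an open-mapping style iteration, summed inside the
closed cone, removes the closure. If `0 ≤ T ≤ S`, normality of `Y` then bounds `‖T a‖` and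
`‖T b‖` by `α ‖S‖ M ‖x‖`, so `‖T‖ ≤ 2 α M ‖S‖`.
-/

open Filter Topology Metric Set

theorem exists_tendsto_sum_of_norm_sub_le_half
    {E : Type*} [SeminormedAddCommGroup E] {f : E → E} (hf : ∀ u, ‖u - f u‖ ≤ ‖u‖ / 2)
    (x : E) :
    ∃ u : ℕ → E, (∀ k, ‖u k‖ ≤ ‖x‖ * (1 / 2) ^ k) ∧
      Tendsto (fun m => ∑ k ∈ Finset.range m, f (u k)) atTop (𝓝 x) := by
  set u : ℕ → E := fun k => (fun w => w - f w)^[k] x with hu_def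
  have hu_succ : ∀ k, u (k + 1) = u k - f (u k) := fun k =>
    Function.iterate_succ_apply' _ k x
  have hu : ∀ k, ‖u k‖ ≤ ‖x‖ * (1 / 2) ^ k := by
    intro k
    induction k with
    | zero => simp [hu_def]
    | succ k ih =>
      rw [hu_succ, pow_succ]
      linarith [hf (u k)]
  refine ⟨u, hu, ?_⟩
  have hsum : ∀ m, ∑ k ∈ Finset.range m, f (u k) = x - u m := fun m =>
    calc ∑ k ∈ Finset.range m, f (u k) = ∑ k ∈ Finset.range m, (u k - u (k + 1)) := by
          simp [hu_succ]
      _ = x - u m := Finset.sum_range_sub' u m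
  have hu_zero : Tendsto u atTop (𝓝 0) := by
    refine squeeze_zero_norm hu ?_
    simpa using (tendsto_pow_atTop_nhds_zero_of_lt_one (by norm_num : (0 : ℝ) ≤ 1 / 2)
      (by norm_num)).const_mul ‖x‖
  simpa [hsum] using tendsto_const_nhds.sub hu_zero

namespace PointedCone

variable {X : Type*} [NormedAddCommGroup X] [NormedSpace ℝ X] (C : PointedCone ℝ X)

def boundedDiffs (r : ℝ) : Set X :=
  {x | ∃ a ∈ C, ∃ b ∈ C, x = a - b ∧ ‖a‖ ≤ r ∧ ‖b‖ ≤ r}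

variable {C}

theorem zero_mem_boundedDiffs {r : ℝ} (hr : 0 ≤ r) : (0 : X) ∈ C.boundedDiffs r :=
  ⟨0, C.zero_mem, 0, C.zero_mem, by simp, by simpa using hr, by simpa using hr⟩

theorem sub_mem_closure_boundedDiffs {r s : ℝ} {x y : X} (hx : x ∈ closure (C.boundedDiffs r))
    (hy : y ∈ closure (C.boundedDiffs s)) : x - y ∈ closure (C.boundedDiffs (r + s)) := by
  refine map_mem_closure₂ continuous_sub hx hy ?_
  rintro _ ⟨a, ha, b, hb, rfl, hna, hnb⟩ _ ⟨a', ha', b', hb', rfl, hna', hnb'⟩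
  refine ⟨a + b', C.add_mem ha hb', b + a', C.add_mem hb ha', by abel, ?_, ?_⟩
  · linarith [norm_add_le a b']
  · linarith [norm_add_le b a']

theorem smul_mem_closure_boundedDiffs {r t : ℝ} {x : X} (ht : 0 ≤ t)
    (hx : x ∈ closure (C.boundedDiffs r)) : t • x ∈ closure (C.boundedDiffs (t * r)) := by
  refine map_mem_closure (continuous_const_smul t) hx ?_
  rintro _ ⟨a, ha, b, hb, rfl, hna, hnb⟩
  refine ⟨t • a, C.smul_mem ht ha, t • b, C.smul_mem ht hb, smul_sub t a b, ?_, ?_⟩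
  · rw [norm_smul, Real.norm_of_nonneg ht]; gcongr
  · rw [norm_smul, Real.norm_of_nonneg ht]; gcongr

theorem exists_ball_subset_closure_boundedDiffs [CompleteSpace X]
    (hgen : ∀ x : X, ∃ a ∈ C, ∃ b ∈ C, x = a - b) :
    ∃ r > 0, ∃ ε > 0, ball (0 : X) ε ⊆ closure (C.boundedDiffs r) := by
  have hcover : ⋃ n : ℕ, closure (C.boundedDiffs (n + 1)) = univ := by
    refine eq_univ_of_forall fun x => mem_iUnion.2 ?_
    obtain ⟨a, ha, b, hb, rfl⟩ := hgen x
    obtain ⟨n, hn⟩ := exists_nat_ge (max ‖a‖ ‖b‖)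
    refine ⟨n, subset_closure ⟨a, ha, b, hb, rfl, ?_, ?_⟩⟩
    · linarith [le_max_left ‖a‖ ‖b‖]
    · linarith [le_max_right ‖a‖ ‖b‖]
  obtain ⟨n, x₀, hx₀⟩ := nonempty_interior_of_iUnion_of_closed (fun _ => isClosed_closure) hcover
  obtain ⟨ε, hε, hball⟩ := isOpen_iff.1 isOpen_interior x₀ hx₀
  refine ⟨(n + 1) + (n + 1), by positivity, ε, hε, fun y hy => ?_⟩
  have hx₀y : x₀ + y ∈ closure (C.boundedDiffs (n + 1)) :=
    interior_subset (hball (by simpa [dist_eq_norm] using hy))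
  simpa using sub_mem_closure_boundedDiffs hx₀y (interior_subset hx₀)

theorem mem_closure_boundedDiffs_of_ball_subset {r ε : ℝ} (hε : 0 < ε)
    (hball : ball (0 : X) ε ⊆ closure (C.boundedDiffs r)) (x : X) :
    x ∈ closure (C.boundedDiffs (2 * r / ε * ‖x‖)) := by
  rcases eq_or_ne x 0 with rfl | hx
  · simpa using subset_closure (zero_mem_boundedDiffs (C := C) le_rfl)
  have hnx : 0 < ‖x‖ := norm_pos_iff.2 hx
  set t := ε / (2 * ‖x‖) with ht_def
  have ht : 0 < t := by positivity
  have htx : t • x ∈ closure (C.boundedDiffs r) := hball <| by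
    rw [mem_ball_zero_iff, norm_smul, Real.norm_of_nonneg ht.le, ht_def]
    field_simp
    linarith
  have key := smul_mem_closure_boundedDiffs (inv_nonneg.2 ht.le) htx
  rwa [inv_smul_smul₀ ht.ne', show t⁻¹ * r = 2 * r / ε * ‖x‖ by rw [ht_def]; field_simp] at key

theorem exists_hasSum_mem_of_norm_le [CompleteSpace X] (hC : IsClosed (C : Set X))
    {g : ℕ → X} {c : ℝ} (hg : ∀ k, g k ∈ C) (hgc : ∀ k, ‖g k‖ ≤ c * (1 / 2) ^ k) :
    ∃ a ∈ C, ‖a‖ ≤ 2 * c ∧ HasSum g a := by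
  have hgeo : HasSum (fun k : ℕ => c * (1 / 2) ^ k) (c * 2) := hasSum_geometric_two.mul_left c
  refine ⟨∑' k, g k, tsum_mem hC hg, ?_, (Summable.of_norm_bounded hgeo.summable hgc).hasSum⟩
  linarith [tsum_of_norm_bounded hgeo hgc]

theorem mem_boundedDiffs_of_forall_mem_closure [CompleteSpace X] (hC : IsClosed (C : Set X))
    {M : ℝ} (hM : 0 ≤ M) (hcl : ∀ x : X, x ∈ closure (C.boundedDiffs (M * ‖x‖))) (x : X) :
    x ∈ C.boundedDiffs (2 * M * ‖x‖) := by
  have happrox : ∀ u : X, ∃ v ∈ C.boundedDiffs (M * ‖u‖), ‖u - v‖ ≤ ‖u‖ / 2 := by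
    intro u
    rcases eq_or_ne u 0 with rfl | hu
    · exact ⟨0, zero_mem_boundedDiffs (by simp), by simp⟩
    obtain ⟨v, hv, huv⟩ := Metric.mem_closure_iff.1 (hcl u) (‖u‖ / 2) (by positivity)
    exact ⟨v, hv, (dist_eq_norm u v ▸ huv).le⟩
  choose v hv hvu using happrox
  choose A hA B hB hAB hAn hBn using hv
  obtain ⟨u, hu, hsum⟩ := exists_tendsto_sum_of_norm_sub_le_half hvu x
  have hgeometric : ∀ F : X → X, (∀ w, ‖F w‖ ≤ M * ‖w‖) → ∀ k, ‖F (u k)‖ ≤ M * ‖x‖ * (1 / 2) ^ k :=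
    fun F hF k => (hF (u k)).trans <| by rw [mul_assoc]; gcongr; exact hu k
  obtain ⟨a, ha, hna, hAa⟩ := exists_hasSum_mem_of_norm_le hC (fun k => hA (u k)) (hgeometric A hAn)
  obtain ⟨b, hb, hnb, hBb⟩ := exists_hasSum_mem_of_norm_le hC (fun k => hB (u k)) (hgeometric B hBn)
  refine ⟨a, ha, b, hb, ?_, by linarith, by linarith⟩
  simp only [hAB] at hsum
  exact tendsto_nhds_unique hsum (hAa.sub hBb).tendsto_sum_nat

theorem exists_forall_mem_boundedDiffs [CompleteSpace X] (hC : IsClosed (C : Set X))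
    (hgen : ∀ x : X, ∃ a ∈ C, ∃ b ∈ C, x = a - b) :
    ∃ M > 0, ∀ x : X, x ∈ C.boundedDiffs (M * ‖x‖) := by
  obtain ⟨r, hr, ε, hε, hball⟩ := exists_ball_subset_closure_boundedDiffs hgen
  exact ⟨2 * (2 * r / ε), by positivity, mem_boundedDiffs_of_forall_mem_closure hC
    (by positivity) (mem_closure_boundedDiffs_of_ball_subset hε hball)⟩

theorem opNorm_le_of_forall_mem_boundedDiffs {Y : Type*} [NormedAddCommGroup Y]
    [NormedSpace ℝ Y] {M α : ℝ} (hM : 0 ≤ M) (hα : 0 ≤ α)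
    (hdec : ∀ x : X, x ∈ C.boundedDiffs (M * ‖x‖)) (Ypos : Set Y)
    (hnormal : ∀ x y : Y, x ∈ Ypos → y - x ∈ Ypos → ‖x‖ ≤ α * ‖y‖) {T S : X →L[ℝ] Y}
    (hT : ∀ x ∈ C, T x ∈ Ypos) (hTS : ∀ x ∈ C, S x - T x ∈ Ypos) :
    ‖T‖ ≤ 2 * α * M * ‖S‖ := by
  refine T.opNorm_le_bound (by positivity) fun x => ?_
  obtain ⟨a, ha, b, hb, rfl, hna, hnb⟩ := hdec x
  have hpos : ∀ c ∈ C, ‖c‖ ≤ M * ‖a - b‖ → ‖T c‖ ≤ α * M * ‖S‖ * ‖a - b‖ := fun c hc hnc =>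
    calc ‖T c‖ ≤ α * ‖S c‖ := hnormal _ _ (hT c hc) (hTS c hc)
      _ ≤ α * (‖S‖ * (M * ‖a - b‖)) := by gcongr; exact S.le_opNorm_of_le hnc
      _ = α * M * ‖S‖ * ‖a - b‖ := by ring
  calc ‖T (a - b)‖ ≤ ‖T a‖ + ‖T b‖ := by rw [map_sub]; exact norm_sub_le _ _
    _ ≤ 2 * α * M * ‖S‖ * ‖a - b‖ := by linarith [hpos a ha hna, hpos b hb hnb]

end PointedCone

theorem stmt6_general
    {X : Type*} [NormedAddCommGroup X] [NormedSpace ℝ X] [CompleteSpace X]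
    {Y : Type*} [NormedAddCommGroup Y] [NormedSpace ℝ Y]
    (Xpos : Set X) (hXpos_closed : IsClosed Xpos)
    (hXpos_add : ∀ x ∈ Xpos, ∀ y ∈ Xpos, x + y ∈ Xpos)
    (hXpos_smul : ∀ (t : ℝ), 0 ≤ t → ∀ x ∈ Xpos, t • x ∈ Xpos)
    (Ypos : Set Y)
    (α : ℝ) (hα : 0 < α)
    (hXgen : ∀ x : X, ∃ a ∈ Xpos, ∃ b ∈ Xpos, x = a - b)
    (hYnormal : ∀ x y : Y, x ∈ Ypos → y - x ∈ Ypos → ‖x‖ ≤ α * ‖y‖) :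
    ∃ (γ : ℝ), 0 < γ ∧
      ∀ T S : X →L[ℝ] Y,
        (∀ x ∈ Xpos, T x ∈ Ypos) →
        (∀ x ∈ Xpos, S x - T x ∈ Ypos) →
        ‖T‖ ≤ γ * ‖S‖ := by
  let C : PointedCone ℝ X :=
    { carrier := Xpos
      add_mem' := fun {x y} hx hy => hXpos_add x hx y hy
      zero_mem' := by
        obtain ⟨a, ha, -⟩ := hXgen 0
        simpa using hXpos_smul 0 le_rfl a ha
      smul_mem' := fun t x hx => hXpos_smul t t.2 x hx }
  obtain ⟨M, hM, hdec⟩ := C.exists_forall_mem_boundedDiffs hXpos_closed hXgen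
  exact ⟨2 * α * M, by positivity, fun T S hT hTS =>
    PointedCone.opNorm_le_of_forall_mem_boundedDiffs hM.le hα.le hdec Ypos hYnormal hT hTS⟩

/-- Let `X` and `Y` be pre-ordered Banach spaces with closed cones,
`α > 0`. If `Xpos` is generating in `X` and `Y` is `α`-normal, then there exists
`γ > 0` such that `B(X,Y)` is `γ`-normal: `0 ≤ T ≤ S` in the operator order
implies `‖T‖ ≤ γ * ‖S‖`. -/
theorem stmt6
    {X : Type*} [NormedAddCommGroup X] [NormedSpace ℝ X] [CompleteSpace X]
    {Y : Type*} [NormedAddCommGroup Y] [NormedSpace ℝ Y] [CompleteSpace Y]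
    (Xpos : Set X) (hXpos_closed : IsClosed Xpos)
    (hXpos_add : ∀ x ∈ Xpos, ∀ y ∈ Xpos, x + y ∈ Xpos)
    (hXpos_smul : ∀ (t : ℝ), 0 ≤ t → ∀ x ∈ Xpos, t • x ∈ Xpos)
    (Ypos : Set Y) (hYpos_closed : IsClosed Ypos)
    (hYpos_add : ∀ x ∈ Ypos, ∀ y ∈ Ypos, x + y ∈ Ypos)
    (hYpos_smul : ∀ (t : ℝ), 0 ≤ t → ∀ x ∈ Ypos, t • x ∈ Ypos)
    (α : ℝ) (hα : 0 < α)
    (hXgen : ∀ x : X, ∃ a ∈ Xpos, ∃ b ∈ Xpos, x = a - b)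
    (hYnormal : ∀ x y : Y, x ∈ Ypos → y - x ∈ Ypos → ‖x‖ ≤ α * ‖y‖) :
    ∃ (γ : ℝ), 0 < γ ∧
      ∀ T S : X →L[ℝ] Y,
        (∀ x ∈ Xpos, T x ∈ Ypos) →
        (∀ x ∈ Xpos, S x - T x ∈ Ypos) →
        ‖T‖ ≤ γ * ‖S‖ :=
  stmt6_general Xpos hXpos_closed hXpos_add hXpos_smul Ypos α hα hXgen hYnormal
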